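/- arXiv:1904.06783 — 2 statements merged into one kernel-verified Lean document; each statement's English description precedes it below -/
import Mathlib

section
/- For all cubefree positive integers m and n (i.e., no prime cube divides m or n), one has Σ_{d₁ | m} Σ_{d₂ | n} μ(m/d₁) μ(n/d₂) gcd(d₁,d₂) = φ(m) if m = n, and the sum equals 0 if m ≠ n. -/
open scoped BigOperators
open Finset

attribute [local instance] Classical.propDecidable

noncomputable section

/-- `e_q(t) = exp(2πi·t/q)`. -/
def eQ (q : ℕ) (t : ℤ) : ℂ := Complex.exp (2 * Real.pi * Complex.I * (t : ℂ) / (q : ℂ))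

/-- The Ramanujan sum `c_r(k) = ∑_{1 ≤ b ≤ r, gcd(b,r)=1} e_r(k·b)`. -/
def cR (r : ℕ) (k : ℤ) : ℂ :=
  ∑ b ∈ (Finset.Icc 1 r).filter (fun b : ℕ => Nat.gcd b r = 1), eQ r (k * (b : ℤ))

/-- `μ²`: the indicator function of the squarefree integers (extended to `ℤ`). -/
def musq (m : ℤ) : ℝ := if Squarefree m then 1 else 0

/-- A positive integer is cubefree if no prime cube divides it. -/
def Cubefree (q : ℕ) : Prop := ∀ p : ℕ, p.Prime → ¬ p ^ 3 ∣ q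

/-- The density `γ_q(a)` of squarefree numbers in the progression `a mod q`. -/
def gammaQ (q : ℕ) (a : ℤ) : ℝ :=
  if ∃ p : ℕ, p.Prime ∧ p ^ 2 ∣ q ∧ (p : ℤ) ^ 2 ∣ a then 0
  else (6 / Real.pi ^ 2) * (∏ p ∈ q.primeFactors, (p : ℝ) ^ 2 / ((p : ℝ) ^ 2 - 1)) *
    ∏ p ∈ q.primeFactors.filter (fun p : ℕ => ¬ p ^ 2 ∣ q ∧ (p : ℤ) ∣ a), (1 - 1 / (p : ℝ))

/-- `γ_q^*(a) = ∑_{d ∣ q} μ(q/d) γ_d(a)`. -/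
def gammaStar (q : ℕ) (a : ℤ) : ℝ :=
  ∑ d ∈ q.divisors, ((ArithmeticFunction.moebius (q / d) : ℤ) : ℝ) * gammaQ d a

/-- `t(q) = ∏_{p ∣ q} (−1)/(p²−1)`. -/
def tQ (q : ℕ) : ℝ := ∏ p ∈ q.primeFactors, (-1) / ((p : ℝ) ^ 2 - 1)

/-- `ϑ_q^*(a) = γ_q^*(N − a)`. -/
def thetaStar (N q : ℕ) (a : ℤ) : ℝ := gammaStar q ((N : ℤ) - a)

/-- `ρ_q(a)` (relative to the fixed progression `a' mod q'`). -/
def rhoQ (q' : ℕ) (a' : ℤ) (q : ℕ) (a : ℤ) : ℝ :=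
  if Int.gcd a q = 1 ∧ ((Nat.gcd q q' : ℤ) ∣ (a - a')) then
    (q : ℝ) / ((Nat.lcm q q').totient : ℝ)
  else 0

/-- `ρ_q^*(a) = ∑_{d ∣ q} μ(q/d) ρ_d(a)`. -/
def rhoStar (q' : ℕ) (a' : ℤ) (q : ℕ) (a : ℤ) : ℝ :=
  ∑ d ∈ q.divisors, ((ArithmeticFunction.moebius (q / d) : ℤ) : ℝ) * rhoQ q' a' d a

/-- `ρ̃_q^*` for `q = q₁q₂²`: the explicit formula for `ρ_q^*` without the
divisibility condition `q₂² ∣ q'`. -/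
def rhoTilde (q' : ℕ) (a' : ℤ) (q₁ q₂ : ℕ) (a : ℤ) : ℂ :=
  ((ArithmeticFunction.moebius (q₁ / Nat.gcd q₁ q') : ℤ) : ℂ) *
    cR (q₁ / Nat.gcd q₁ q') a * cR (Nat.gcd q₁ q' * q₂ ^ 2) (a - a') /
    ((q'.totient : ℂ) * ((q₁ / Nat.gcd q₁ q').totient : ℂ))

/-- `η_q^*` for `q = q₁q₂²`. -/
def etaStar (N q' : ℕ) (a' : ℤ) (q₁ q₂ : ℕ) (a : ℤ) : ℂ :=
  (1 / 2) * (((Real.pi ^ 2 / (6 * tQ (q₁ * q₂ ^ 2)) * thetaStar N (q₁ * q₂ ^ 2) a : ℝ) : ℂ)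
    + (((q'.totient * (q₁ / Nat.gcd q₁ q').totient : ℕ) : ℂ) /
        ((ArithmeticFunction.moebius (q₁ / Nat.gcd q₁ q') : ℤ) : ℂ)) * rhoTilde q' a' q₁ q₂ a)

/-- `κ_q^*` for `q = q₁q₂²`. -/
def kappaStar (N q' : ℕ) (a' : ℤ) (q₁ q₂ : ℕ) (a : ℤ) : ℂ :=
  (1 / 2) * (((Real.pi ^ 2 / (6 * tQ (q₁ * q₂ ^ 2)) * thetaStar N (q₁ * q₂ ^ 2) a : ℝ) : ℂ)
    - (((q'.totient * (q₁ / Nat.gcd q₁ q').totient : ℕ) : ℂ) /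
        ((ArithmeticFunction.moebius (q₁ / Nat.gcd q₁ q') : ℤ) : ℂ)) * rhoTilde q' a' q₁ q₂ a)

/-- The local Hermitian product `[f|g]_q = (1/q) ∑_{a mod q} f(a) conj(g(a))`. -/
def localProd (q : ℕ) (f g : ℤ → ℂ) : ℂ :=
  (1 / (q : ℂ)) * ∑ a ∈ Finset.range q, f (a : ℤ) * (starRingEnd ℂ) (g (a : ℤ))

/-- The global Hermitian product `[f|g] = ∑_{n ≤ N} f(n) conj(g(n))`. -/
def globalProd (N : ℕ) (f g : ℤ → ℂ) : ℂ :=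
  ∑ n ∈ Finset.Icc (1 : ℤ) (N : ℤ), f n * (starRingEnd ℂ) (g n)

/-- `∇_q` lifts a function on `ℤ/qℤ` (given on integer representatives, periodically)
to the integers by reduction mod `q`. -/
def nabla (q : ℕ) (h : ℤ → ℂ) (n : ℤ) : ℂ := h (n % (q : ℤ))

/-- `f(n) = Λ(n)·1_{n ≡ a' (mod q')}`. -/
def fLam (q' : ℕ) (a' : ℤ) (n : ℤ) : ℂ :=
  if n ≡ a' [ZMOD (q' : ℤ)] then ((ArithmeticFunction.vonMangoldt n.toNat : ℝ) : ℂ) else 0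

/-- `g(n) = μ²(N − n)`. -/
def gSF (N : ℕ) (n : ℤ) : ℂ := ((musq ((N : ℤ) - n) : ℝ) : ℂ)

/-- The sum-of-divisors function `σ`. -/
def sigmaFn (m : ℕ) : ℕ := ∑ d ∈ m.divisors, d

/-- The weighted representation count `𝓡_{a,q}(N)`. -/
def repCount (N q : ℕ) (a : ℤ) : ℝ :=
  ∑ p ∈ (Finset.range (N + 1)).filter (fun p : ℕ => p.Prime ∧ (p : ℤ) ≡ a [ZMOD (q : ℤ)]),
    musq ((N : ℤ) - (p : ℤ)) * Real.log p

/-- The singular series `𝔖_{a,q}(N)`. -/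
def singSeries (N q : ℕ) (a : ℤ) : ℂ :=
  (6 / ((q.totient : ℂ) * (Real.pi : ℂ) ^ 2)) *
  ∏' p : Nat.Primes,
    if ¬ ((p : ℕ) ∣ q) then
      1 + cR (p : ℕ) (N : ℤ) / ((((p : ℕ) : ℂ) ^ 2 - 1) * (((p : ℕ) : ℂ) - 1))
    else if ¬ ((p : ℕ) ^ 2 ∣ q) then
      1 - cR (p : ℕ) ((N : ℤ) - a) / (((p : ℕ) : ℂ) ^ 2 - 1)
    else
      1 - (cR (p : ℕ) ((N : ℤ) - a) + cR ((p : ℕ) ^ 2) ((N : ℤ) - a)) / (((p : ℕ) : ℂ) ^ 2 - 1)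

/-- `h_q(r) = ∑_{a mod q} φ(q')ρ_q^*(a) e_q(−ra)`. -/
def hQ (q' : ℕ) (a' : ℤ) (q : ℕ) (r : ℤ) : ℂ :=
  ∑ a ∈ Finset.range q,
    (((q'.totient : ℝ) * rhoStar q' a' q (a : ℤ) : ℝ) : ℂ) * eQ q (-(r * (a : ℤ)))

/-- `b(q) = ∑_{1≤r≤q, gcd(r,q)=1} e_q(rN) h_q(r)`. -/
def bQ (N q' : ℕ) (a' : ℤ) (q : ℕ) : ℂ :=
  ∑ r ∈ (Finset.Icc 1 q).filter (fun r : ℕ => Nat.gcd r q = 1), eQ q ((r : ℤ) * (N : ℤ)) * hQ q' a' q r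


private lemma sum_moeb (n : ℕ) :
    ∑ d ∈ n.divisors, (ArithmeticFunction.moebius d : ℤ) = if n = 1 then 1 else 0 := by
  have h : ((ArithmeticFunction.moebius * (ArithmeticFunction.zeta : ArithmeticFunction ℕ) :
      ArithmeticFunction ℤ)) n = ∑ d ∈ n.divisors, ArithmeticFunction.moebius d :=
    ArithmeticFunction.coe_mul_zeta_apply
  rw [ArithmeticFunction.moebius_mul_coe_zeta] at h
  rw [← h, ArithmeticFunction.one_apply]

private lemma keyA (n e : ℕ) (hn : 0 < n) :
    ∑ d ∈ n.divisors, (if e ∣ d then (ArithmeticFunction.moebius (n / d) : ℤ) else 0)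
      = if e = n then 1 else 0 := by
  by_cases he : e ∣ n
  · have hepos : 0 < e := Nat.pos_of_dvd_of_pos he hn
    have hq : 0 < n / e := Nat.div_pos (Nat.le_of_dvd hn he) hepos
    rw [← Finset.sum_filter]
    have himg : n.divisors.filter (fun d => e ∣ d) = (n / e).divisors.image (fun k => e * k) := by
      ext d
      simp only [Finset.mem_filter, Nat.mem_divisors, Finset.mem_image]
      constructor
      · rintro ⟨⟨hd, -⟩, k, rfl⟩
        exact ⟨k, ⟨(Nat.dvd_div_iff_mul_dvd he).mpr hd, hq.ne'⟩, rfl⟩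
      · rintro ⟨k, ⟨hk, -⟩, rfl⟩
        exact ⟨⟨(Nat.dvd_div_iff_mul_dvd he).mp hk, hn.ne'⟩, Dvd.intro k rfl⟩
    rw [himg, Finset.sum_image (by intro x hx y hy h; exact Nat.eq_of_mul_eq_mul_left hepos h)]
    have hdd : ∀ k, n / (e * k) = (n / e) / k := fun k => (Nat.div_div_eq_div_mul n e k).symm
    simp_rw [hdd]
    rw [Nat.sum_div_divisors (n / e) (fun d => (ArithmeticFunction.moebius d : ℤ)), sum_moeb]
    congr 1
    apply propext
    constructor
    · intro h
      have := Nat.eq_mul_of_div_eq_right he h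
      omega
    · rintro rfl
      exact Nat.div_self hn
  · rw [if_neg (fun h : e = n => he (h ▸ dvd_rfl))]
    apply Finset.sum_eq_zero
    intro d hd
    rw [if_neg]
    exact fun hed => he (hed.trans (Nat.mem_divisors.mp hd).1)

/-- For cubefree `m`, `n`:
`∑_{d₁∣m} ∑_{d₂∣n} μ(m/d₁) μ(n/d₂) gcd(d₁,d₂) = φ(m)·1_{m=n}`. -/
theorem stmt_3 (m n : ℕ) (hm : 0 < m) (hn : 0 < n) (hmc : Cubefree m) (hnc : Cubefree n) :
    ∑ d₁ ∈ m.divisors, ∑ d₂ ∈ n.divisors,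
        (ArithmeticFunction.moebius (m / d₁) : ℤ) * (ArithmeticFunction.moebius (n / d₂) : ℤ) *
          (Nat.gcd d₁ d₂ : ℤ) =
      if m = n then (m.totient : ℤ) else 0 := by
  have hgcd : ∀ d₁ ∈ m.divisors, ∀ d₂ ∈ n.divisors,
      (Nat.gcd d₁ d₂ : ℤ) = ∑ e ∈ m.divisors,
        (if e ∣ d₁ ∧ e ∣ d₂ then (e.totient : ℤ) else 0) := by
    intro d₁ hd₁ d₂ hd₂
    obtain ⟨hd₁m, -⟩ := Nat.mem_divisors.mp hd₁
    have h1 : 0 < d₁ := Nat.pos_of_mem_divisors hd₁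
    have hset : (Nat.gcd d₁ d₂).divisors = m.divisors.filter (fun e => e ∣ d₁ ∧ e ∣ d₂) := by
      ext e
      simp only [Nat.mem_divisors, Finset.mem_filter, Nat.dvd_gcd_iff]
      constructor
      · rintro ⟨⟨he1, he2⟩, -⟩
        exact ⟨⟨he1.trans hd₁m, hm.ne'⟩, he1, he2⟩
      · rintro ⟨-, he1, he2⟩
        exact ⟨⟨he1, he2⟩, (Nat.gcd_pos_of_pos_left d₂ h1).ne'⟩
    rw [← Finset.sum_filter, ← hset]
    exact_mod_cast congrArg (Nat.cast : ℕ → ℤ) (Nat.sum_totient (Nat.gcd d₁ d₂)).symm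
  calc ∑ d₁ ∈ m.divisors, ∑ d₂ ∈ n.divisors,
        (ArithmeticFunction.moebius (m / d₁) : ℤ) * (ArithmeticFunction.moebius (n / d₂) : ℤ) *
          (Nat.gcd d₁ d₂ : ℤ)
      = ∑ d₁ ∈ m.divisors, ∑ d₂ ∈ n.divisors, ∑ e ∈ m.divisors,
          ((if e ∣ d₁ then (ArithmeticFunction.moebius (m / d₁) : ℤ) else 0) *
           (if e ∣ d₂ then (ArithmeticFunction.moebius (n / d₂) : ℤ) else 0) *
           (e.totient : ℤ)) := by
        apply Finset.sum_congr rfl; intro d₁ hd₁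
        apply Finset.sum_congr rfl; intro d₂ hd₂
        rw [hgcd d₁ hd₁ d₂ hd₂, Finset.mul_sum]
        apply Finset.sum_congr rfl; intro e he
        by_cases hA : e ∣ d₁ <;> by_cases hB : e ∣ d₂ <;> simp [hA, hB] <;> ring
    _ = ∑ d₁ ∈ m.divisors, ∑ e ∈ m.divisors, ∑ d₂ ∈ n.divisors,
          ((if e ∣ d₁ then (ArithmeticFunction.moebius (m / d₁) : ℤ) else 0) *
           (if e ∣ d₂ then (ArithmeticFunction.moebius (n / d₂) : ℤ) else 0) *
           (e.totient : ℤ)) := Finset.sum_congr rfl fun d₁ _ => Finset.sum_comm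
    _ = ∑ e ∈ m.divisors, ∑ d₁ ∈ m.divisors, ∑ d₂ ∈ n.divisors,
          ((if e ∣ d₁ then (ArithmeticFunction.moebius (m / d₁) : ℤ) else 0) *
           (if e ∣ d₂ then (ArithmeticFunction.moebius (n / d₂) : ℤ) else 0) *
           (e.totient : ℤ)) := Finset.sum_comm
    _ = ∑ e ∈ m.divisors,
          ((if e = m then (1 : ℤ) else 0) * (if e = n then (1 : ℤ) else 0) * (e.totient : ℤ)) := by
        apply Finset.sum_congr rfl; intro e he
        rw [← keyA m e hm, ← keyA n e hn, Finset.sum_mul_sum, Finset.sum_mul]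
        exact Finset.sum_congr rfl fun d₁ _ => by rw [Finset.sum_mul]
    _ = if m = n then (m.totient : ℤ) else 0 := by
        rw [Finset.sum_eq_single m]
        · split_ifs <;> simp_all
        · intro e he hne; simp [hne]
        · intro h; exact absurd (Nat.mem_divisors_self m hm.ne') h


end
end

section
/- Fix a positive integer N. For every cubefree positive integer q, ‖ϑ_q^*‖_q² = (6t(q)/π²)² · φ(q), where ϑ_q^*(a) = γ_q^*(N−a). -/
/-!
For `d ≠ 0` the normalised density `(π²/6)·γ_d(a)` is a product of local factors over the prime
powers `p^e ∥ d`, hence multiplicative in `d`, and so is its Möbius transform `(π²/6)·γ_q^*(a)`.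
Comparing local factors at `p` and `p²` gives `γ_q^*(a) = (6 t(q)/π²)·c_q(a)` for cubefree `q`,
where `c_q(a) = ∑_{d ∣ (q,a)} μ(q/d) d` is the Ramanujan sum. The claim is then Parseval's identity
`∑_{a mod q} c_q(a)² = q φ(q)` (after the shift `a ↦ N - a`), which is multiplicative in `q` by the
Chinese remainder theorem and is checked directly on prime powers.
-/

open scoped BigOperators
open Finset

attribute [local instance] Classical.propDecidable

noncomputable section

open Function ArithmeticFunction
open scoped ArithmeticFunction.Moebius

section Periodic

theorem sum_range_eq_sum_zmod_val {M : Type*} [AddCommMonoid M] (n : ℕ) [NeZero n] (f : ℕ → M) :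
    ∑ a ∈ range n, f a = ∑ x : ZMod n, f x.val :=
  sum_nbij' (↑) ZMod.val (by simp) (by simp [ZMod.val_lt])
    (fun a ha => ZMod.val_cast_of_lt (mem_range.mp ha)) (fun x _ => ZMod.natCast_zmod_val x)
    (fun a ha => by rw [ZMod.val_cast_of_lt (mem_range.mp ha)])

theorem Function.Periodic.apply_intCast_val {α : Type*} {f : ℤ → α} {n : ℕ} [NeZero n]
    (hf : Periodic f n) (a : ℤ) : f (a : ZMod n).val = f a := by
  rw [ZMod.val_intCast, Int.emod_def, mul_comm]
  simpa using hf.sub_int_mul_eq (a / n)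

theorem Function.Periodic.sum_range_mul_of_coprime {R : Type*} [NonUnitalNonAssocSemiring R]
    {f g : ℤ → R} {m n : ℕ} (hmn : m.Coprime n) (hf : Periodic f m) (hg : Periodic g n) :
    ∑ a ∈ range (m * n), f a * g a = (∑ a ∈ range m, f a) * ∑ a ∈ range n, g a := by
  rcases eq_or_ne m 0 with rfl | hm; · simp
  rcases eq_or_ne n 0 with rfl | hn; · simp
  have : NeZero m := ⟨hm⟩
  have : NeZero n := ⟨hn⟩
  rw [sum_range_eq_sum_zmod_val (m * n) (fun a => f a * g a),
    sum_range_eq_sum_zmod_val m (fun a => f a), sum_range_eq_sum_zmod_val n (fun a => g a),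
    sum_mul_sum, ← Fintype.sum_prod_type']
  refine Fintype.sum_equiv (ZMod.chineseRemainder hmn).toEquiv _ _ fun x => ?_
  rw [← hf.apply_intCast_val (x.val : ℤ), ← hg.apply_intCast_val (x.val : ℤ)]
  congr 4 <;> simp [ZMod.chineseRemainder, Prod.fst_zmod_cast, Prod.snd_zmod_cast]

theorem Function.Periodic.sum_range_sub {M : Type*} [AddCommMonoid M] {f : ℤ → M} {n : ℕ}
    (hf : Periodic f n) (b : ℤ) : ∑ a ∈ range n, f (b - a) = ∑ a ∈ range n, f a := by
  rcases eq_or_ne n 0 with rfl | hn; · simp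
  have : NeZero n := ⟨hn⟩
  rw [sum_range_eq_sum_zmod_val n (fun a => f (b - a)), sum_range_eq_sum_zmod_val n (fun a => f a)]
  refine Fintype.sum_equiv (Equiv.subLeft (b : ZMod n)) _ _ fun x => ?_
  rw [← hf.apply_intCast_val]
  congr 3
  simp

end Periodic

theorem card_filter_dvd_range {d n : ℕ} (hd : d ∣ n) : #{a ∈ range n | d ∣ a} = n / d := by
  obtain ⟨m, rfl⟩ := hd
  rcases d.eq_zero_or_pos with rfl | hd; · simp
  rw [Nat.mul_div_cancel_left m hd]
  refine (card_nbij' (· / d) (d * ·) ?_ ?_ ?_ ?_).trans (card_range m)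
  · intro a ha
    simp only [coe_filter, mem_range, Set.mem_ofPred_eq, coe_range, Set.mem_Iio] at ha ⊢
    exact (Nat.div_lt_iff_lt_mul hd).2 (by linarith [ha.1])
  · intro j hj
    simp only [coe_filter, coe_range, mem_range, Set.mem_Iio, Set.mem_ofPred_eq] at hj ⊢
    exact ⟨Nat.mul_lt_mul_of_pos_left hj hd, dvd_mul_right d j⟩
  · intro a ha
    simp only [coe_filter, mem_range, Set.mem_ofPred_eq] at ha
    exact Nat.mul_div_cancel' ha.2
  · intro j _
    exact Nat.mul_div_cancel_left j hd

theorem coe_moebius_mul_apply_prime_pow_succ {R : Type*} [Ring R] (f : ArithmeticFunction R)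
    {p : ℕ} (hp : p.Prime) (k : ℕ) :
    ((μ : ArithmeticFunction R) * f) (p ^ (k + 1)) = f (p ^ (k + 1)) - f (p ^ k) := by
  rw [mul_apply, Nat.sum_divisorsAntidiagonal (fun x y => (μ : ArithmeticFunction R) x * f y),
    Nat.sum_divisors_prime_pow hp, sum_range_succ', sum_range_succ']
  simp [moebius_apply_prime_pow hp, moebius_apply_prime hp, sub_eq_neg_add, pow_succ p k,
    Nat.mul_div_cancel _ hp.pos]

section RamanujanSum

variable {R : Type*} [CommRing R]

def dvdWeight (a : ℤ) : ArithmeticFunction R := ⟨fun d => if (d : ℤ) ∣ a then d else 0, by simp⟩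

theorem dvdWeight_apply (a : ℤ) (d : ℕ) :
    (dvdWeight a d : R) = if (d : ℤ) ∣ a then (d : R) else 0 := rfl

theorem isMultiplicative_dvdWeight (a : ℤ) :
    (dvdWeight a : ArithmeticFunction R).IsMultiplicative := by
  refine IsMultiplicative.iff_ne_zero.2 ⟨by simp [dvdWeight_apply], fun {m n} _ _ hmn => ?_⟩
  have hdvd : (m : ℤ) * n ∣ a ↔ (m : ℤ) ∣ a ∧ (n : ℤ) ∣ a :=
    ⟨fun h => ⟨dvd_of_mul_right_dvd h, dvd_of_mul_left_dvd h⟩,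
      fun h => (Nat.isCoprime_iff_coprime.2 hmn).mul_dvd h.1 h.2⟩
  simp only [dvdWeight_apply, Nat.cast_mul, hdvd]
  split_ifs <;> simp_all

theorem sum_range_dvdWeight_mul {d e n : ℕ} (hde : d ∣ e) (hen : e ∣ n) :
    ∑ a ∈ range n, (dvdWeight (a : ℤ) d : R) * dvdWeight (a : ℤ) e = (n / e : ℕ) * (d * e) := by
  have hterm : ∀ a : ℕ, (dvdWeight (a : ℤ) d : R) * dvdWeight (a : ℤ) e =
      if e ∣ a then (d : R) * e else 0 := by
    intro a
    simp only [dvdWeight_apply, Int.natCast_dvd_natCast]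
    by_cases he : e ∣ a
    · simp [he, hde.trans he]
    · simp [he]
  simp only [hterm, ← sum_filter, sum_const, card_filter_dvd_range hen, nsmul_eq_mul]

/-- The divisor-sum form `∑_{d ∣ (q, a)} μ(q/d) d` of the Ramanujan sum `cR q a`. -/
def ramanujanSum (a : ℤ) : ArithmeticFunction R := (μ : ArithmeticFunction R) * dvdWeight a

theorem isMultiplicative_ramanujanSum (a : ℤ) :
    (ramanujanSum a : ArithmeticFunction R).IsMultiplicative :=
  isMultiplicative_moebius.intCast.mul (isMultiplicative_dvdWeight a)

theorem ramanujanSum_apply_prime_pow_succ (a : ℤ) {p : ℕ} (hp : p.Prime) (k : ℕ) :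
    (ramanujanSum a (p ^ (k + 1)) : R) = dvdWeight a (p ^ (k + 1)) - dvdWeight a (p ^ k) :=
  coe_moebius_mul_apply_prime_pow_succ _ hp k

theorem periodic_ramanujanSum (q : ℕ) : Periodic (fun a : ℤ => (ramanujanSum a q : R)) q := by
  intro a
  simp only [ramanujanSum, mul_apply]
  refine sum_congr rfl fun x hx => ?_
  have hx2 : (x.2 : ℤ) ∣ q :=
    Int.natCast_dvd_natCast.2 (Dvd.intro_left _ (Nat.mem_divisorsAntidiagonal.1 hx).1)
  simp only [dvdWeight_apply, dvd_add_left hx2]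

theorem sum_range_sq_ramanujanSum_prime_pow {p : ℕ} (hp : p.Prime) (k : ℕ) :
    ∑ a ∈ range (p ^ (k + 1)), (ramanujanSum (a : ℤ) (p ^ (k + 1)) : R) ^ 2 =
      (p ^ (k + 1) : ℕ) * (p ^ (k + 1)).totient := by
  have hdvd : p ^ k ∣ p ^ (k + 1) := pow_dvd_pow p k.le_succ
  have hsq : ∀ a : ℕ, (ramanujanSum (a : ℤ) (p ^ (k + 1)) : R) ^ 2 =
      dvdWeight (a : ℤ) (p ^ (k + 1)) * dvdWeight (a : ℤ) (p ^ (k + 1)) -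
      2 * (dvdWeight (a : ℤ) (p ^ k) * dvdWeight (a : ℤ) (p ^ (k + 1))) +
      dvdWeight (a : ℤ) (p ^ k) * dvdWeight (a : ℤ) (p ^ k) := by
    intro a
    rw [ramanujanSum_apply_prime_pow_succ _ hp]
    ring
  simp only [hsq, sum_add_distrib, sum_sub_distrib, ← mul_sum,
    sum_range_dvdWeight_mul dvd_rfl dvd_rfl, sum_range_dvdWeight_mul hdvd dvd_rfl,
    sum_range_dvdWeight_mul dvd_rfl hdvd, Nat.div_self (pow_pos hp.pos _),
    Nat.pow_div (Nat.le_add_right k 1) hp.pos, add_tsub_cancel_left, Nat.totient_prime_pow_succ hp]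
  push_cast [Nat.cast_sub hp.one_le]
  ring

theorem sum_range_sq_ramanujanSum (q : ℕ) :
    ∑ a ∈ range q, (ramanujanSum (a : ℤ) q : R) ^ 2 = q * q.totient := by
  induction q using Nat.recOnPosPrimePosCoprime with
  | prime_pow p n hp hn =>
    obtain ⟨k, rfl⟩ := Nat.exists_eq_add_one_of_ne_zero hn.ne'
    exact sum_range_sq_ramanujanSum_prime_pow hp k
  | zero => simp
  | one => simp [(isMultiplicative_ramanujanSum 0).map_one]
  | coprime m n _ _ hmn ihm ihn =>
    have hsq : ∀ {q : ℕ}, Periodic (fun a : ℤ => (ramanujanSum a q : R) ^ 2) q :=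
      fun {q} => (periodic_ramanujanSum q).comp (· ^ 2)
    calc ∑ a ∈ range (m * n), (ramanujanSum (a : ℤ) (m * n) : R) ^ 2
        = ∑ a ∈ range (m * n), (ramanujanSum (a : ℤ) m : R) ^ 2 * ramanujanSum (a : ℤ) n ^ 2 := by
          simp only [(isMultiplicative_ramanujanSum _).map_mul_of_coprime hmn, mul_pow]
      _ = (m * m.totient) * (n * n.totient) := by
          rw [hsq.sum_range_mul_of_coprime hmn hsq, ihm, ihn]
      _ = ((m * n : ℕ) : R) * (m * n).totient := by
          rw [Nat.totient_mul hmn]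
          push_cast
          ring

end RamanujanSum

theorem Cubefree.ne_zero {q : ℕ} (hq : Cubefree q) : q ≠ 0 := by
  rintro rfl
  exact hq 2 Nat.prime_two (dvd_zero _)

theorem Cubefree.factorization_le_two {q : ℕ} (hq : Cubefree q) (p : ℕ) :
    q.factorization p ≤ 2 := by
  by_cases hp : p.Prime
  · by_contra! h
    exact hq p hp ((pow_dvd_pow p h).trans (Nat.ordProj_dvd q p))
  · simp [Nat.factorization_eq_zero_of_not_prime q hp]

def densityFactor (p e : ℕ) (a : ℤ) : ℝ :=
  if 2 ≤ e ∧ (p : ℤ) ^ 2 ∣ a then 0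
  else (p : ℝ) ^ 2 / ((p : ℝ) ^ 2 - 1) * if e = 1 ∧ (p : ℤ) ∣ a then 1 - 1 / (p : ℝ) else 1

theorem gammaQ_eq_prod_densityFactor {q : ℕ} (hq : q ≠ 0) (a : ℤ) :
    gammaQ q a = 6 / Real.pi ^ 2 * q.factorization.prod fun p e => densityFactor p e a := by
  have hsq : ∀ p ∈ q.primeFactors, p ^ 2 ∣ q ↔ 2 ≤ q.factorization p := fun p hp =>
    (Nat.prime_of_mem_primeFactors hp).pow_dvd_iff_le_factorization hq
  rw [gammaQ, Nat.prod_factorization_eq_prod_primeFactors]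
  split_ifs with hbad
  · obtain ⟨p, hp, hpq, hpa⟩ := hbad
    have hmem : p ∈ q.primeFactors :=
      Nat.mem_primeFactors.2 ⟨hp, (dvd_pow_self p two_ne_zero).trans hpq, hq⟩
    rw [prod_eq_zero hmem (by simp [densityFactor, (hsq p hmem).1 hpq, hpa]), mul_zero]
  · push Not at hbad
    have hfactor : ∀ p ∈ q.primeFactors, densityFactor p (q.factorization p) a =
        (p : ℝ) ^ 2 / ((p : ℝ) ^ 2 - 1) *
          if ¬ p ^ 2 ∣ q ∧ (p : ℤ) ∣ a then 1 - 1 / (p : ℝ) else 1 := by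
      intro p hp
      have hpos : q.factorization p ≠ 0 := Finsupp.mem_support_iff.1 hp
      have hone : q.factorization p = 1 ↔ ¬ p ^ 2 ∣ q := by rw [hsq p hp]; omega
      have hgood : ¬ (2 ≤ q.factorization p ∧ (p : ℤ) ^ 2 ∣ a) := fun h =>
        hbad p (Nat.prime_of_mem_primeFactors hp) ((hsq p hp).2 h.1) h.2
      rw [densityFactor, if_neg hgood]
      simp only [hone]
    rw [prod_congr rfl hfactor, prod_mul_distrib, ← prod_filter, mul_assoc]

def normalizedDensity (a : ℤ) : ArithmeticFunction ℝ :=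
  ⟨fun q => if q = 0 then 0 else q.factorization.prod fun p e => densityFactor p e a, if_pos rfl⟩

theorem isMultiplicative_normalizedDensity (a : ℤ) : (normalizedDensity a).IsMultiplicative := by
  refine IsMultiplicative.iff_ne_zero.2 ⟨by simp [normalizedDensity], fun {m n} hm hn hmn => ?_⟩
  simp only [normalizedDensity, coe_mk, if_neg (mul_ne_zero hm hn), if_neg hm, if_neg hn,
    Nat.factorization_mul_of_coprime hmn]
  exact Finsupp.prod_add_index_of_disjoint hmn.disjoint_primeFactors _

theorem normalizedDensity_apply_prime_pow {p e : ℕ} (hp : p.Prime) (he : e ≠ 0) (a : ℤ) :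
    normalizedDensity a (p ^ e) = densityFactor p e a := by
  simp [normalizedDensity, hp.ne_zero, hp.factorization_pow, Finsupp.prod,
    Nat.primeFactors_prime_pow he hp]

theorem gammaStar_eq_moebius_mul (q : ℕ) (a : ℤ) :
    gammaStar q a = 6 / Real.pi ^ 2 * ((μ : ArithmeticFunction ℝ) * normalizedDensity a) q := by
  rw [gammaStar, mul_apply, Nat.sum_divisorsAntidiagonal'
    (fun x y => (μ : ArithmeticFunction ℝ) x * normalizedDensity a y), mul_sum]
  refine sum_congr rfl fun d hd => ?_
  have hd0 : d ≠ 0 := Nat.ne_of_gt (Nat.pos_of_mem_divisors hd)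
  simp only [intCoe_apply, normalizedDensity, coe_mk, if_neg hd0, gammaQ_eq_prod_densityFactor hd0]
  ring

theorem moebius_mul_normalizedDensity_apply_prime_pow {p e : ℕ} (hp : p.Prime) (he : e ≠ 0)
    (he2 : e ≤ 2) (a : ℤ) :
    ((μ : ArithmeticFunction ℝ) * normalizedDensity a) (p ^ e) =
      -1 / ((p : ℝ) ^ 2 - 1) * ramanujanSum a (p ^ e) := by
  have hp2 : (p : ℝ) ^ 2 - 1 ≠ 0 := by
    have : (2 : ℝ) ≤ p := by exact_mod_cast hp.two_le
    nlinarith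
  have hp0 : (p : ℝ) ≠ 0 := by exact_mod_cast hp.ne_zero
  obtain ⟨k, rfl⟩ := Nat.exists_eq_add_one_of_ne_zero he
  have hk : k ≤ 1 := by omega
  rw [coe_moebius_mul_apply_prime_pow_succ _ hp, ramanujanSum_apply_prime_pow_succ _ hp,
    normalizedDensity_apply_prime_pow hp he]
  interval_cases k
  · simp only [zero_add, pow_one, pow_zero, (isMultiplicative_normalizedDensity a).map_one,
      dvdWeight_apply, densityFactor]
    by_cases h1 : (p : ℤ) ∣ a <;> simp [h1] <;> field_simp <;> ring
  · rw [normalizedDensity_apply_prime_pow hp one_ne_zero]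
    simp only [dvdWeight_apply, densityFactor, pow_one]
    by_cases h2 : (p : ℤ) ^ 2 ∣ a
    · simp [h2, (dvd_pow_self (p : ℤ) two_ne_zero).trans h2]
      field_simp
    by_cases h1 : (p : ℤ) ∣ a
    · simp [h1, h2]
      field_simp
      ring
    · simp [h1, h2]

theorem moebius_mul_normalizedDensity_apply_of_cubefree {q : ℕ} (hq : Cubefree q) (a : ℤ) :
    ((μ : ArithmeticFunction ℝ) * normalizedDensity a) q = tQ q * ramanujanSum a q := by
  have hmul := isMultiplicative_moebius.intCast.mul (isMultiplicative_normalizedDensity a)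
  rw [hmul.multiplicative_factorization _ hq.ne_zero,
    (isMultiplicative_ramanujanSum a).multiplicative_factorization _ hq.ne_zero, tQ,
    Nat.prod_factorization_eq_prod_primeFactors, Nat.prod_factorization_eq_prod_primeFactors,
    ← prod_mul_distrib]
  exact prod_congr rfl fun p hp =>
    moebius_mul_normalizedDensity_apply_prime_pow (Nat.prime_of_mem_primeFactors hp)
      (Finsupp.mem_support_iff.1 hp) (hq.factorization_le_two p) a

theorem stmt_6_general (N : ℕ) (q : ℕ) (hcf : Cubefree q) :
    localProd q (fun a => ((thetaStar N q a : ℝ) : ℂ)) (fun a => ((thetaStar N q a : ℝ) : ℂ)) =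
      (((6 * tQ q / Real.pi ^ 2) ^ 2 * (q.totient : ℝ) : ℝ) : ℂ) := by
  have htheta : ∀ a, thetaStar N q a = 6 * tQ q / Real.pi ^ 2 * ramanujanSum ((N : ℤ) - a) q := by
    intro a
    rw [thetaStar, gammaStar_eq_moebius_mul, moebius_mul_normalizedDensity_apply_of_cubefree hcf]
    ring
  have hsum :
      ∑ a ∈ range q, thetaStar N q a ^ 2 = (6 * tQ q / Real.pi ^ 2) ^ 2 * (q * q.totient) := by
    simp only [htheta, mul_pow, ← mul_sum]
    rw [← sum_range_sq_ramanujanSum q]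
    congr 1
    exact ((periodic_ramanujanSum q).comp (· ^ 2)).sum_range_sub (N : ℤ)
  have hq : (q : ℂ) ≠ 0 := Nat.cast_ne_zero.2 hcf.ne_zero
  simp only [localProd, Complex.conj_ofReal, ← sq, ← Complex.ofReal_pow, ← Complex.ofReal_sum, hsum]
  push_cast
  field_simp

/-- For cubefree `q`: `‖ϑ_q^*‖_q² = (6t(q)/π²)²·φ(q)`. -/
theorem stmt_6 (N : ℕ) (hN : 0 < N) (q : ℕ) (hq : 0 < q) (hcf : Cubefree q) :
    localProd q (fun a => ((thetaStar N q a : ℝ) : ℂ)) (fun a => ((thetaStar N q a : ℝ) : ℂ)) =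
      (((6 * tQ q / Real.pi ^ 2) ^ 2 * (q.totient : ℝ) : ℝ) : ℂ) :=
  stmt_6_general N q hcf

end
end
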